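/- Let n ≥ 2. The closure of X(Σ)_{∅,[n-1];≥0} taken inside the topological space X(Σ)_{≥0} (with the subspace topology from X(Σ)) equals all of X(Σ)_{≥0}. -/

import Mathlib

open Matrix

attribute [local instance] Classical.propDecidable

noncomputable section

namespace PetersonPaper

/-- `ℂ^{2(n-1)}` with coordinates `(x_1,…,x_{n-1}; y_1,…,y_{n-1})`. -/
abbrev C2 (n : ℕ) := (Fin (n-1) → ℂ) × (Fin (n-1) → ℂ)

/-- The complement `ℂ^{2(n-1)} - E` of the exceptional locus: for every `i`,
`(x_i, y_i) ≠ (0,0)`. -/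
def goodSet (n : ℕ) : Set (C2 n) := { p | ∀ i, p.1 i ≠ 0 ∨ p.2 i ≠ 0 }

/-- The maximal torus `T ⊆ SL_n(ℂ)` of diagonal matrices, recorded by its diagonal
entries `(t_1,…,t_n)` with `∏ t_i = 1`. -/
def TGrp (n : ℕ) : Type := { t : Fin n → ℂ // ∏ i, t i = 1 }

/-- The fundamental weight `ϖ_i(t) = t_1 t_2 ⋯ t_i` (1-based; `i : Fin (n-1)`
encodes `i.1+1`). -/
def varpi (n : ℕ) (t : TGrp n) (i : Fin (n-1)) : ℂ :=
  ∏ k : Fin n, if (k : ℕ) ≤ (i : ℕ) then t.1 k else 1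

/-- The simple root `α_i(t) = t_i t_{i+1}⁻¹` (1-based; `i : Fin (n-1)` encodes
`i.1+1`). -/
def alphaR (n : ℕ) (t : TGrp n) (i : Fin (n-1)) : ℂ :=
  t.1 ⟨i.1, by have := i.isLt; omega⟩ * (t.1 ⟨i.1 + 1, by have := i.isLt; omega⟩)⁻¹

/-- The `T`-action `t • (x; y) = (ϖ_i(t) x_i; α_i(t) y_i)`. -/
def actT (n : ℕ) (t : TGrp n) (p : C2 n) : C2 n :=
  (fun i => varpi n t i * p.1 i, fun i => alphaR n t i * p.2 i)

/-- The orbit relation of the `T`-action on `ℂ^{2(n-1)} - E`. -/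
def XRel (n : ℕ) (p q : goodSet n) : Prop := ∃ t : TGrp n, actT n t ↑p = (↑q : C2 n)

/-- The toric variety `X(Σ) = (ℂ^{2(n-1)} - E)/T`, with the quotient topology. -/
def XSig (n : ℕ) := Quot (XRel n)

noncomputable instance (n : ℕ) : TopologicalSpace (XSig n) :=
  inferInstanceAs (TopologicalSpace (Quot (XRel n)))

/-- The class `[x; y] ∈ X(Σ)` of a point of `ℂ^{2(n-1)} - E`. -/
def XMk (n : ℕ) (p : goodSet n) : XSig n := Quot.mk (XRel n) p

/-- The torus orbit `X(Σ)_{K,J}`: classes `[x;y]` with `x_i = 0` iff `i ∈ K` and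
`y_i ≠ 0` iff `i ∈ J`. -/
def XKJ (n : ℕ) (K J : Set (Fin (n-1))) : Set (XSig n) :=
  { z | ∃ p : goodSet n, XMk n p = z ∧
      (∀ i, (p : C2 n).1 i = 0 ↔ i ∈ K) ∧ (∀ i, (p : C2 n).2 i ≠ 0 ↔ i ∈ J) }

/-- The nonnegative part `X(Σ)_{≥0}`: classes with a representative all of whose
coordinates are real and nonnegative. -/
def Xge0 (n : ℕ) : Set (XSig n) :=
  { z | ∃ p : goodSet n, XMk n p = z ∧
      ∀ i, ((p : C2 n).1 i).im = 0 ∧ 0 ≤ ((p : C2 n).1 i).re ∧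
        ((p : C2 n).2 i).im = 0 ∧ 0 ≤ ((p : C2 n).2 i).re }

/-- `X(Σ)_{K,J;≥0} = X(Σ)_{K,J} ∩ X(Σ)_{≥0}`. -/
def XKJge0 (n : ℕ) (K J : Set (Fin (n-1))) : Set (XSig n) := XKJ n K J ∩ Xge0 n

/-! Perturbing a nonnegative representative `(x; y)` to `(x + ε; y + ε)` with `ε > 0` lands in the
open stratum, and these perturbations converge to `(x; y)` as `ε → 0`. Continuity of the quotient
map `ℂ^{2(n-1)} - E → X(Σ)` carries this convergence down to `X(Σ)`. -/

open scoped ComplexOrder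
open Set Filter Topology

theorem _root_.Complex.Ici_subset_closure_Ioi (a : ℂ) : Ici a ⊆ closure (Ioi a) := by
  intro z hz
  have hlim : Tendsto (fun ε : ℝ => z + ε) (𝓝[>] 0) (𝓝 z) := by
    have hcont : Continuous fun ε : ℝ => z + ε := by fun_prop
    simpa using (hcont.tendsto 0).mono_left nhdsWithin_le_nhds
  exact mem_closure_of_tendsto hlim <| eventually_nhdsWithin_of_forall fun ε hε =>
    lt_add_of_le_of_pos hz (Complex.zero_lt_real.2 hε)

-- In `ComplexOrder`, `0 ≤ z` means that `z` is a nonnegative real number.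
def nonnegPart (n : ℕ) : Set (C2 n) := univ.pi (fun _ => Ici 0) ×ˢ univ.pi (fun _ => Ici 0)

def posPart (n : ℕ) : Set (C2 n) := univ.pi (fun _ => Ioi 0) ×ˢ univ.pi (fun _ => Ioi 0)

section

variable (n : ℕ)

theorem nonnegPart_subset_closure_posPart : nonnegPart n ⊆ closure (posPart n) := by
  rw [posPart, closure_prod_eq, closure_pi_set]
  exact prod_mono (pi_mono fun _ _ => Complex.Ici_subset_closure_Ioi 0)
    (pi_mono fun _ _ => Complex.Ici_subset_closure_Ioi 0)

theorem posPart_subset_nonnegPart : posPart n ⊆ nonnegPart n :=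
  prod_mono (pi_mono fun _ _ => Ioi_subset_Ici_self) (pi_mono fun _ _ => Ioi_subset_Ici_self)

theorem posPart_subset_goodSet : posPart n ⊆ goodSet n :=
  fun _ hp i => Or.inl (hp.1 i trivial).ne'

theorem Xge0_eq_image_nonnegPart : Xge0 n = XMk n '' (Subtype.val ⁻¹' nonnegPart n) := by
  ext z
  simp only [Xge0, nonnegPart, mem_image, mem_preimage, mem_prod, mem_univ_pi, mem_Ici,
    Complex.nonneg_iff, eq_comm (a := (0 : ℝ))]
  constructor
  · rintro ⟨p, rfl, hp⟩
    exact ⟨p, ⟨fun i => ⟨(hp i).2.1, (hp i).1⟩, fun i => ⟨(hp i).2.2.2, (hp i).2.2.1⟩⟩, rfl⟩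
  · rintro ⟨p, ⟨hx, hy⟩, rfl⟩
    exact ⟨p, rfl, fun i => ⟨(hx i).2, (hx i).1, (hy i).2, (hy i).1⟩⟩

theorem image_posPart_subset_XKJge0 :
    XMk n '' (Subtype.val ⁻¹' posPart n) ⊆ XKJge0 n ∅ univ := by
  rintro _ ⟨p, hp, rfl⟩
  refine ⟨⟨p, rfl, fun i => ?_, fun i => ?_⟩, ?_⟩
  · simpa using (hp.1 i trivial).ne'
  · simpa using (hp.2 i trivial).ne'
  · rw [Xge0_eq_image_nonnegPart]
    exact mem_image_of_mem _ (posPart_subset_nonnegPart n hp)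

end

theorem closure_top_stratum_eq_nonneg_part (n : ℕ) :
    closure (Subtype.val ⁻¹' (XKJge0 n (∅ : Set (Fin (n-1))) (Set.univ : Set (Fin (n-1))))
        : Set (Xge0 n)) = Set.univ := by
  refine eq_univ_of_forall fun z => ?_
  rw [closure_subtype, Subtype.image_preimage_coe, inter_eq_right.2 fun _ h => h.2]
  obtain ⟨p, hp, hpz⟩ := (Xge0_eq_image_nonnegPart n).subset z.2
  have hp_closure : p ∈ closure (Subtype.val ⁻¹' posPart n) := by
    rw [closure_subtype, Subtype.image_preimage_coe, inter_eq_right.2 (posPart_subset_goodSet n)]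
    exact nonnegPart_subset_closure_posPart n hp
  rw [← hpz]
  exact closure_mono (image_posPart_subset_XKJge0 n)
    (image_closure_subset_closure_image continuous_quot_mk ⟨p, hp_closure, rfl⟩)

end PetersonPaper
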